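/- Let q be a prime power and L a field extension of Fq of degree m with m ≥ n. Let 1 ≤ k < n and let T ∈ L^{n×n} be invertible; write T^{−1} = [H; H₁] where H ∈ L^{k×n} consists of the first k rows of T^{−1} and H₁ ∈ L^{(n−k)×n} of the remaining rows. Suppose the code C = {x ∈ L^n : Hx = 0} has minimum rank distance k + 1. Let S be a random variable with values in L^k, let V be uniformly distributed on L^{n−k} and independent of S, and let X = T·(S; V) ∈ L^n, where (S; V) denotes the column vector obtained by stacking S on top of V. Then for every integer 0 ≤ μ ≤ n − k and every matrix B ∈ Fq^{μ×n} (acting on L^n via the embedding Fq ⊆ L), I(S; BX) = 0. -/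

import Mathlib

set_option autoImplicit false

open Matrix MeasureTheory

/-- Shannon entropy (in nats) of a finitely-valued random variable. -/
noncomputable def entropy {Ω α : Type*} [Fintype α] [MeasurableSpace Ω]
    (P : Measure Ω) (X : Ω → α) : ℝ :=
  - ∑ a : α, (P {ω | X ω = a}).toReal * Real.log (P {ω | X ω = a}).toReal

/-- Mutual information (in nats) `I(X;Y) = H(X) + H(Y) - H(X,Y)`. -/
noncomputable def mutualInfo {Ω α β : Type*} [Fintype α] [Fintype β] [MeasurableSpace Ω]
    (P : Measure Ω) (X : Ω → α) (Y : Ω → β) : ℝ :=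
  entropy P X + entropy P Y - entropy P (fun ω => (X ω, Y ω))

/-- The rank weight of `x ∈ L^n`: the dimension over `F` of the `F`-span of its coordinates. -/
noncomputable def rankWeight (F : Type*) {L : Type*} [Field F] [Field L] [Algebra F L]
    {n : ℕ} (x : Fin n → L) : ℕ :=
  Module.finrank F (Submodule.span F (Set.range x))

/-- The minimum rank distance of a code `C ⊆ L^n` equals `d`. -/
def minRankDistEq (F : Type*) {L : Type*} [Field F] [Field L] [Algebra F L]
    {n : ℕ} (C : Set (Fin n → L)) (d : ℕ) : Prop :=
  IsLeast {e | ∃ x ∈ C, ∃ y ∈ C, x ≠ y ∧ rankWeight F (x - y) = e} d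

/-- The column vector `(s; v) ∈ L^n` obtained by stacking `s ∈ L^k` on top of
`v ∈ L^{n-k}`. -/
def stackVec {L : Type*} {k n : ℕ} (s : Fin k → L) (v : Fin (n - k) → L) : Fin n → L :=
  fun i => if h : (i : ℕ) < k then s ⟨i, h⟩
    else v ⟨(i : ℕ) - k, by have := i.isLt; omega⟩


/-!
Since the first `k` rows of `T⁻¹ T = 1` read off `s`, the vectors `T (0; v)` are codewords, so
the eavesdropper sees `B X = f S + φ V` with `f s = B T (s; 0)` and `φ v = B T (0; v)` additive.
The MRD property makes `φ` attain every value of `B` on `L^n`, in particular every `f s`. The law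
of `φ V` for uniform `V` is invariant under translation by the range of `φ`, so the law of `B X`
given `S = s` does not depend on `s`: the observation is independent of `S`.
-/

lemma entropy_eq_sum_negMulLog {Ω α : Type*} [MeasurableSpace Ω] [Fintype α]
    (P : Measure Ω) (X : Ω → α) :
    entropy P X = ∑ a, Real.negMulLog (P {ω | X ω = a}).toReal := by
  simp [entropy, Real.negMulLog, ← Finset.sum_neg_distrib]

section Probability

variable {Ω : Type*} [Fintype Ω] [MeasurableSpace Ω] [MeasurableSingletonClass Ω]
  (P : Measure Ω)

lemma measure_eq_sum_measure_inter_fiber {β : Type*} [Fintype β] (E : Set Ω) (Z : Ω → β) :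
    P E = ∑ b, P (E ∩ {ω | Z ω = b}) := by
  have hmeas : ∀ b ∈ (Finset.univ : Finset β), MeasurableSet (Z ⁻¹' {b}) :=
    fun _ _ => (Set.toFinite _).measurableSet
  have := sum_measure_preimage_singleton (μ := P.restrict E) Finset.univ hmeas
  simp only [Finset.coe_univ, Set.preimage_univ, Measure.restrict_apply_univ] at this
  rw [← this]
  refine Finset.sum_congr rfl fun b _ => ?_
  rw [Measure.restrict_apply ((Set.toFinite _).measurableSet), Set.inter_comm]
  rfl

variable {α G : Type*} [Fintype G] (S : Ω → α) (V : Ω → G)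

lemma measure_and_mem_eq_mul
    (hindep : ∀ s v, P {ω | S ω = s ∧ V ω = v} = P {ω | S ω = s} * P {ω | V ω = v})
    (s : α) (A : Set G) :
    P {ω | S ω = s ∧ V ω ∈ A} = P {ω | S ω = s} * P {ω | V ω ∈ A} := by
  classical
  rw [measure_eq_sum_measure_inter_fiber P {ω | S ω = s ∧ V ω ∈ A} V,
    measure_eq_sum_measure_inter_fiber P {ω | V ω ∈ A} V, Finset.mul_sum]
  refine Finset.sum_congr rfl fun v _ => ?_
  by_cases hv : v ∈ A
  · have hSV : {ω | S ω = s ∧ V ω ∈ A} ∩ {ω | V ω = v} = {ω | S ω = s ∧ V ω = v} := by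
      ext ω; simp only [Set.mem_inter_iff, Set.mem_ofPred_eq]; aesop
    have hV : {ω | V ω ∈ A} ∩ {ω | V ω = v} = {ω | V ω = v} := by
      ext ω; simp only [Set.mem_inter_iff, Set.mem_ofPred_eq]; aesop
    rw [hSV, hV, hindep]
  · have hempty : {ω | V ω ∈ A} ∩ {ω | V ω = v} = ∅ :=
      Set.eq_empty_of_forall_notMem fun ω ⟨hA, hω⟩ => hv (hω ▸ hA)
    rw [hempty, measure_empty, mul_zero]
    exact measure_mono_null (hempty ▸ fun ω hω => ⟨hω.1.2, hω.2⟩) measure_empty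

lemma measure_comp_eq_sum {β : Type*} [DecidableEq β] (g : G → β) (b : β) :
    P {ω | g (V ω) = b} = ∑ v, if g v = b then P {ω | V ω = v} else 0 := by
  rw [measure_eq_sum_measure_inter_fiber P _ V]
  refine Finset.sum_congr rfl fun v _ => ?_
  split_ifs with hv
  · congr 1; ext ω; simp only [Set.mem_inter_iff, Set.mem_ofPred_eq]; aesop
  · convert measure_empty (μ := P); ext ω; simp only [Set.mem_inter_iff, Set.mem_ofPred_eq]; aesop

lemma measure_addMonoidHom_comp_add_eq_of_uniform [AddGroup G] {H : Type*} [AddGroup H]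
    (hunif : ∀ v₁ v₂, P {ω | V ω = v₁} = P {ω | V ω = v₂}) (φ : G →+ H) (y : H) (u : G) :
    P {ω | φ (V ω) = y + φ u} = P {ω | φ (V ω) = y} := by
  classical
  simp only [measure_comp_eq_sum P V, hunif _ 0]
  refine (Fintype.sum_equiv (Equiv.addRight u) _ _ fun v => ?_).symm
  simp only [Equiv.coe_addRight, map_add, add_left_inj]

variable [IsProbabilityMeasure P]

lemma sum_measure_fiber_eq_one {β : Type*} [Fintype β] (Z : Ω → β) :
    ∑ b, P {ω | Z ω = b} = 1 := by
  simpa using (measure_eq_sum_measure_inter_fiber P Set.univ Z).symm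

lemma sum_toReal_measure_fiber_eq_one {β : Type*} [Fintype β] (Z : Ω → β) :
    ∑ b, (P {ω | Z ω = b}).toReal = 1 := by
  rw [← ENNReal.toReal_sum fun _ _ => measure_ne_top P _, sum_measure_fiber_eq_one,
    ENNReal.toReal_one]

lemma mutualInfo_eq_zero_of_indep {β γ : Type*} [Fintype β] [Fintype γ] (X : Ω → β) (Y : Ω → γ)
    (h : ∀ a b, P {ω | X ω = a ∧ Y ω = b} = P {ω | X ω = a} * P {ω | Y ω = b}) :
    mutualInfo P X Y = 0 := by
  have hpair : entropy P (fun ω => (X ω, Y ω)) = entropy P X + entropy P Y := by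
    simp only [entropy_eq_sum_negMulLog, Fintype.sum_prod_type, Prod.mk.injEq, h,
      ENNReal.toReal_mul, Real.negMulLog_mul, Finset.sum_add_distrib, ← Finset.mul_sum,
      ← Finset.sum_mul, sum_toReal_measure_fiber_eq_one, one_mul]
  rw [mutualInfo, hpair]
  ring

theorem mutualInfo_eq_zero_of_add_uniform [Fintype α] [AddGroup G] {H : Type*} [AddCommGroup H]
    [Fintype H] (hunif : ∀ v₁ v₂, P {ω | V ω = v₁} = P {ω | V ω = v₂})
    (hindep : ∀ s v, P {ω | S ω = s ∧ V ω = v} = P {ω | S ω = s} * P {ω | V ω = v})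
    (φ : G →+ H) (f : α → H) (hf : ∀ a, f a ∈ Set.range φ) :
    mutualInfo P S (fun ω => f (S ω) + φ (V ω)) = 0 := by
  refine mutualInfo_eq_zero_of_indep P S _ fun a h => ?_
  have hjoint : ∀ a, P {ω | S ω = a ∧ f (S ω) + φ (V ω) = h}
      = P {ω | S ω = a} * P {ω | φ (V ω) = h - f a} := fun a => by
    calc _ = P {ω | S ω = a ∧ V ω ∈ {v | φ v = h - f a}} := by
          congr 1
          ext ω
          simp only [Set.mem_ofPred_eq, eq_sub_iff_add_eq']
          aesop
      _ = _ := measure_and_mem_eq_mul P S V hindep a _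
  have hconst : ∀ a', P {ω | φ (V ω) = h - f a'} = P {ω | φ (V ω) = h - f a} := fun a' => by
    obtain ⟨u, hu⟩ := hf a
    obtain ⟨u', hu'⟩ := hf a'
    rw [← measure_addMonoidHom_comp_add_eq_of_uniform P V hunif φ _ (u' - u), map_sub, hu, hu',
      sub_add_sub_cancel]
  have hmarg : P {ω | f (S ω) + φ (V ω) = h} = P {ω | φ (V ω) = h - f a} := by
    rw [measure_eq_sum_measure_inter_fiber P _ S]
    calc ∑ a', P ({ω | f (S ω) + φ (V ω) = h} ∩ {ω | S ω = a'})
        = ∑ a', P {ω | S ω = a'} * P {ω | φ (V ω) = h - f a} := by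
          refine Finset.sum_congr rfl fun a' _ => ?_
          rw [Set.inter_comm, ← hconst a', ← hjoint]
          rfl
      _ = P {ω | φ (V ω) = h - f a} := by
          rw [← Finset.sum_mul, sum_measure_fiber_eq_one, one_mul]
  rw [hjoint, hmarg]

end Probability

theorem Submodule.exists_le_finrank_eq {K M : Type*} [Field K] [AddCommGroup M] [Module K M]
    [FiniteDimensional K M] (W : Submodule K M) {d : ℕ} (hWd : Module.finrank K W ≤ d)
    (hd : d ≤ Module.finrank K M) : ∃ W' : Submodule K M, W ≤ W' ∧ Module.finrank K W' = d := by
  obtain ⟨c, rfl⟩ := Nat.exists_eq_add_of_le hWd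
  induction c generalizing W with
  | zero => exact ⟨W, le_rfl, rfl⟩
  | succ c ih =>
    obtain ⟨x, hx⟩ : ∃ x, x ∉ W := by
      by_contra! hW
      rw [(Submodule.eq_top_iff'.2 hW), finrank_top] at hd
      omega
    have hrank := finrank_sup_span_singleton hx
    obtain ⟨W', hle, hW'⟩ := ih (W ⊔ K ∙ x) (by omega) (by omega)
    exact ⟨W', le_sup_left.trans hle, by omega⟩

section RankMetric

variable {F L : Type*} [Field F] [Field L] [Algebra F L]

lemma map_algebraMap_mulVec_apply {m n : Type*} [Fintype n] (B : Matrix m n F) (x : n → L)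
    (i : m) : (B.map (algebraMap F L) *ᵥ x) i = Fintype.linearCombination F x (B.row i) := by
  simp [Matrix.mulVec, dotProduct, Fintype.linearCombination_apply, Algebra.smul_def]

lemma map_algebraMap_mulVec_eq_zero_iff {m n : Type*} [Fintype n] (B : Matrix m n F)
    (x : n → L) :
    B.map (algebraMap F L) *ᵥ x = 0 ↔
      Submodule.span F (Set.range B.row) ≤ LinearMap.ker (Fintype.linearCombination F x) := by
  rw [Submodule.span_le, Set.range_subset_iff]
  simp [funext_iff, map_algebraMap_mulVec_apply]

lemma rankWeight_add_finrank_le {n : ℕ} (x : Fin n → L) (W : Submodule F (Fin n → F))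
    (hW : W ≤ LinearMap.ker (Fintype.linearCombination F x)) :
    rankWeight F x + Module.finrank F W ≤ n := by
  have h := LinearMap.finrank_range_add_finrank_ker (Fintype.linearCombination F x)
  rw [Fintype.range_linearCombination, Module.finrank_fin_fun] at h
  have := Submodule.finrank_mono hW
  unfold rankWeight
  omega


lemma Matrix.exists_span_row_le_finrank_eq {μ n r : ℕ} (B : Matrix (Fin μ) (Fin n) F)
    (hμ : μ ≤ r) (hr : r ≤ n) :
    ∃ B' : Matrix (Fin r) (Fin n) F, Submodule.span F (Set.range B.row) ≤
      Submodule.span F (Set.range B'.row) ∧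
        Module.finrank F (Submodule.span F (Set.range B'.row)) = r := by
  have hB : Module.finrank F (Submodule.span F (Set.range B.row)) ≤ r :=
    (finrank_range_le_card _).trans (by simpa using hμ)
  obtain ⟨W, hle, hW⟩ := Submodule.exists_le_finrank_eq _ hB (by simpa using hr)
  let b := Module.finBasisOfFinrankEq F W hW
  have hspan : Submodule.span F (Set.range (Matrix.of fun i => (b i : Fin n → F)).row) = W := by
    rw [show (Matrix.of fun i => (b i : Fin n → F)).row = W.subtype ∘ b from rfl,
      Set.range_comp, Submodule.span_image, b.span_eq, Submodule.map_subtype_top]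
  exact ⟨_, hspan.symm ▸ hle, hspan.symm ▸ hW⟩

/-- Extend the rows of `B` to `r` independent rows `B'`: a codeword killed by `B'` has rank weight
at most `n - r`, so `B' ∘ e` is injective, hence bijective on `L^r`, and `B ∘ e` attains every
value of `B`. -/
theorem exists_map_mulVec_eq_of_lt_rankWeight {n r μ : ℕ} (hr : r ≤ n)
    (e : (Fin r → L) →ₗ[L] (Fin n → L)) (he : ∀ v ≠ 0, n - r < rankWeight F (e v))
    (B : Matrix (Fin μ) (Fin n) F) (hμ : μ ≤ r) (y : Fin n → L) :
    ∃ v, B.map (algebraMap F L) *ᵥ e v = B.map (algebraMap F L) *ᵥ y := by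
  obtain ⟨B', hBB', hB'⟩ := B.exists_span_row_le_finrank_eq hμ hr
  let M' := B'.map (algebraMap F L)
  have hinj : Function.Injective (M'.mulVecLin ∘ₗ e) := by
    refine (injective_iff_map_eq_zero _).2 fun v hv => ?_
    by_contra hv0
    have := rankWeight_add_finrank_le (e v) _ ((map_algebraMap_mulVec_eq_zero_iff B' _).1 hv)
    have := he v hv0
    omega
  obtain ⟨v, hv⟩ := LinearMap.injective_iff_surjective.1 hinj (M' *ᵥ y)
  refine ⟨v, sub_eq_zero.1 ?_⟩
  rw [← mulVec_sub, map_algebraMap_mulVec_eq_zero_iff]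
  refine hBB'.trans ((map_algebraMap_mulVec_eq_zero_iff B' _).1 ?_)
  rw [mulVec_sub, sub_eq_zero]
  exact hv

end RankMetric

lemma minRankDistEq.le_rankWeight {F L : Type*} [Field F] [Field L] [Algebra F L] {n d : ℕ}
    {C : Set (Fin n → L)} (hC : minRankDistEq F C d) (hC0 : 0 ∈ C) {x : Fin n → L}
    (hx : x ∈ C) (hx0 : x ≠ 0) : d ≤ rankWeight F x :=
  hC.2 ⟨x, hx, 0, hC0, hx0, by rw [sub_zero]⟩

def stackVecLinearMap (R : Type*) [Semiring R] (k n : ℕ) :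
    (Fin k → R) × (Fin (n - k) → R) →ₗ[R] (Fin n → R) where
  toFun p := stackVec p.1 p.2
  map_add' p p' := by
    ext i
    by_cases h : (i : ℕ) < k <;> simp [stackVec, h]
  map_smul' c p := by
    ext i
    by_cases h : (i : ℕ) < k <;> simp [stackVec, h]

section Stacking

variable {R : Type*} {k n : ℕ}

lemma stackVec_zero_left_injective [Zero R] :
    Function.Injective (stackVec (0 : Fin k → R) : (Fin (n - k) → R) → Fin n → R) := by
  intro v v' h
  ext j
  simpa [stackVec] using congrFun h ⟨k + j, by omega⟩

@[simp]
lemma stackVec_zero [Zero R] : stackVec (0 : Fin k → R) (0 : Fin (n - k) → R) = 0 := by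
  ext i
  by_cases h : (i : ℕ) < k <;> simp [stackVec, h]

lemma stackVec_eq_add [AddZeroClass R] (s : Fin k → R) (v : Fin (n - k) → R) :
    stackVec s v = stackVec s 0 + stackVec 0 v := by
  ext i
  by_cases h : (i : ℕ) < k <;> simp [stackVec, h]

lemma inv_submatrix_mulVec_mulVec_stackVec [CommRing R] (T : Matrix (Fin n) (Fin n) R)
    (hT : IsUnit T) (hkn : k ≤ n) (s : Fin k → R) (v : Fin (n - k) → R) :
    (T⁻¹).submatrix (Fin.castLE hkn) id *ᵥ (T *ᵥ stackVec s v) = s := by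
  ext i
  change (T⁻¹ *ᵥ (T *ᵥ stackVec s v)) (Fin.castLE hkn i) = s i
  rw [mulVec_mulVec, nonsing_inv_mul T ((isUnit_iff_isUnit_det T).1 hT), one_mulVec]
  simp [stackVec]

lemma lt_rankWeight_mulVec_stackVec_zero {F L : Type*} [Field F] [Field L] [Algebra F L]
    (T : Matrix (Fin n) (Fin n) L) (hT : IsUnit T) (hkn : k ≤ n)
    (hMRD : minRankDistEq F
      {x : Fin n → L | (T⁻¹).submatrix (Fin.castLE hkn) id *ᵥ x = 0} (k + 1))
    {v : Fin (n - k) → L} (hv : v ≠ 0) : k < rankWeight F (T *ᵥ stackVec 0 v) := by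
  have hTv : T *ᵥ stackVec 0 v ≠ 0 := by
    simpa using ((mulVec_injective_of_isUnit hT).comp stackVec_zero_left_injective).ne hv
  exact hMRD.le_rankWeight (mulVec_zero _) (inv_submatrix_mulVec_mulVec_stackVec T hT hkn 0 v) hTv

end Stacking

theorem encoder_parityCheck_MRD_universally_secure_general
    (F L : Type) [Field F]
    [Field L] [Fintype L] [Algebra F L]
    (n k : ℕ) (hkn : k < n)
    (T : Matrix (Fin n) (Fin n) L) (hT : IsUnit T)
    (hMRD : minRankDistEq F
      {x : Fin n → L | (T⁻¹).submatrix (Fin.castLE hkn.le) id *ᵥ x = 0} (k + 1))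
    (Ω : Type) [Fintype Ω] [MeasurableSpace Ω] [MeasurableSingletonClass Ω]
    (P : Measure Ω) [IsProbabilityMeasure P]
    (S : Ω → Fin k → L) (V : Ω → Fin (n - k) → L)
    (hVunif : ∀ v₁ v₂ : Fin (n - k) → L, P {ω | V ω = v₁} = P {ω | V ω = v₂})
    (hindep : ∀ (s : Fin k → L) (v : Fin (n - k) → L),
      P {ω | S ω = s ∧ V ω = v} = P {ω | S ω = s} * P {ω | V ω = v})
    (X : Ω → Fin n → L)
    (hX : ∀ ω, X ω = T *ᵥ stackVec (S ω) (V ω)) :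
    ∀ (μ : ℕ), μ ≤ n - k → ∀ B : Matrix (Fin μ) (Fin n) F,
      mutualInfo P S (fun ω => (B.map (algebraMap F L)) *ᵥ X ω) = 0 := by
  intro μ hμ B
  let e : (Fin (n - k) → L) →ₗ[L] (Fin n → L) :=
    T.mulVecLin ∘ₗ stackVecLinearMap L k n ∘ₗ LinearMap.inr L _ _
  have he : ∀ v ≠ 0, n - (n - k) < rankWeight F (e v) := fun v hv => by
    have : k < rankWeight F (e v) := lt_rankWeight_mulVec_stackVec_zero T hT hkn.le hMRD hv
    omega
  let M := B.map (algebraMap F L)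
  have hMX : (fun ω => M *ᵥ X ω)
      = fun ω => M *ᵥ (T *ᵥ stackVec (S ω) 0) + (M.mulVecLin ∘ₗ e).toAddMonoidHom (V ω) := by
    ext1 ω
    rw [hX, stackVec_eq_add, mulVec_add, mulVec_add]
    rfl
  rw [hMX]
  exact mutualInfo_eq_zero_of_add_uniform P S V hVunif hindep _
    (fun s => M *ᵥ (T *ᵥ stackVec s 0))
    fun s => exists_map_mulVec_eq_of_lt_rankWeight (by omega) e he B hμ _

/-- Encoder structure for coset coding: with `T` invertible, `H` the first `k` rows of
`T⁻¹` whose kernel code is MRD (minimum rank distance `k+1`), `V` uniform on `L^{n-k}`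
independent of `S`, and `X = T·(S;V)`, the scheme is universally secure under `μ`
observations for every `μ ≤ n - k`. -/
theorem encoder_parityCheck_MRD_universally_secure
    (q m : ℕ) (hq : IsPrimePow q)
    (F L : Type) [Field F] [Fintype F] (hF : Fintype.card F = q)
    [Field L] [Fintype L] [Algebra F L] (hm : Module.finrank F L = m)
    (n k : ℕ) (hmn : n ≤ m) (hk : 1 ≤ k) (hkn : k < n)
    (T : Matrix (Fin n) (Fin n) L) (hT : IsUnit T)
    (hMRD : minRankDistEq F
      {x : Fin n → L | (T⁻¹).submatrix (Fin.castLE hkn.le) id *ᵥ x = 0} (k + 1))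
    (Ω : Type) [Fintype Ω] [MeasurableSpace Ω] [MeasurableSingletonClass Ω]
    (P : Measure Ω) [IsProbabilityMeasure P]
    (S : Ω → Fin k → L) (V : Ω → Fin (n - k) → L)
    (hVunif : ∀ v₁ v₂ : Fin (n - k) → L, P {ω | V ω = v₁} = P {ω | V ω = v₂})
    (hindep : ∀ (s : Fin k → L) (v : Fin (n - k) → L),
      P {ω | S ω = s ∧ V ω = v} = P {ω | S ω = s} * P {ω | V ω = v})
    (X : Ω → Fin n → L)
    (hX : ∀ ω, X ω = T *ᵥ stackVec (S ω) (V ω)) :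
    ∀ (μ : ℕ), μ ≤ n - k → ∀ B : Matrix (Fin μ) (Fin n) F,
      mutualInfo P S (fun ω => (B.map (algebraMap F L)) *ᵥ X ω) = 0 :=
  encoder_parityCheck_MRD_universally_secure_general F L n k hkn T hT hMRD Ω P S V hVunif hindep X
    hX
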